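/- Let A be a real symmetric positive definite d×d matrix, let a, b > 0 be real numbers with det A = a/b, and let θ ∈ [1,2]. Then a / det((2−θ)·I + (θ−1)·A) ≤ max(a, b). -/

import Mathlib

open Matrix Finset

/-- If `A` is real symmetric positive definite with `det A = a / b` for `a, b > 0`,
and `θ ∈ [1,2]`, then `a / det((2-θ)•I + (θ-1)•A) ≤ max a b`. -/
theorem interpolant_density_le_max
    (d : ℕ) (A : Matrix (Fin d) (Fin d) ℝ) (hA : A.PosDef)
    (a b : ℝ) (ha : 0 < a) (hb : 0 < b) (hdet : A.det = a / b)
    (θ : ℝ) (hθ : θ ∈ Set.Icc (1 : ℝ) 2) :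
    a / ((2 - θ) • (1 : Matrix (Fin d) (Fin d) ℝ) + (θ - 1) • A).det ≤ max a b := by
  obtain ⟨h1, h2⟩ := hθ
  have ht0 : 0 ≤ θ - 1 := by linarith
  have hs0 : 0 ≤ 2 - θ := by linarith
  set L := hA.1.eigenvalues with hL
  have hLpos : ∀ i, 0 < L i := hA.eigenvalues_pos
  -- determinant of the combination
  have hdetM : ((2 - θ) • (1 : Matrix (Fin d) (Fin d) ℝ) + (θ - 1) • A).det
      = ∏ i, ((2 - θ) + (θ - 1) * L i) := by
    have hU := (Matrix.mem_unitaryGroup_iff).mp (hA.1.eigenvectorUnitary).2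
    have hspec := hA.1.spectral_theorem
    rw [Unitary.conjStarAlgAut_apply] at hspec
    set U := (hA.1.eigenvectorUnitary : Matrix (Fin d) (Fin d) ℝ)
    have hcomb : (2 - θ) • (1 : Matrix (Fin d) (Fin d) ℝ) + (θ - 1) • A
        = U * ((2 - θ) • (1 : Matrix (Fin d) (Fin d) ℝ)
            + (θ - 1) • diagonal (RCLike.ofReal ∘ L)) * star U := by
      rw [Matrix.mul_add, Matrix.add_mul, Matrix.mul_smul, Matrix.mul_smul,
        Matrix.smul_mul, Matrix.smul_mul, Matrix.mul_one, hU, ← hspec]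
    rw [hcomb, det_mul_right_comm, hU, one_mul]
    have : (2 - θ) • (1 : Matrix (Fin d) (Fin d) ℝ)
        + (θ - 1) • diagonal (RCLike.ofReal ∘ L)
        = diagonal (fun i => (2 - θ) + (θ - 1) * L i) := by
      ext i j
      by_cases h : i = j <;>
        simp [h, Matrix.one_apply, Matrix.diagonal_apply, Matrix.add_apply]
    rw [this, det_diagonal]
  -- lower bound for the determinant
  have key : ∏ i, ((2 - θ) + (θ - 1) * L i) ≥ min 1 (a / b) := by
    have step1 : ∀ i, (L i) ^ (θ - 1) ≤ (2 - θ) + (θ - 1) * L i := by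
      intro i
      have := Real.geom_mean_le_arith_mean2_weighted hs0 ht0 zero_le_one
        (le_of_lt (hLpos i)) (by ring)
      simpa using this
    have hprod : (∏ i, L i) ^ (θ - 1) ≤ ∏ i, ((2 - θ) + (θ - 1) * L i) := by
      rw [← Real.finset_prod_rpow _ _ (fun i _ => (hLpos i).le)]
      exact Finset.prod_le_prod (fun i _ => Real.rpow_nonneg (hLpos i).le _)
        (fun i _ => step1 i)
    have hdA : ∏ i, L i = a / b := by
      have := hA.1.det_eq_prod_eigenvalues
      simp only [RCLike.ofReal_real_eq_id, id] at this
      rw [← this, hdet]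
    rw [hdA] at hprod
    refine le_trans ?_ hprod
    have hab : 0 < a / b := div_pos ha hb
    rcases le_total (a / b) 1 with h | h
    · calc min 1 (a/b) ≤ a/b := min_le_right _ _
        _ = (a/b) ^ (1:ℝ) := (Real.rpow_one _).symm
        _ ≤ (a/b) ^ (θ-1) := Real.rpow_le_rpow_of_exponent_ge hab h (by linarith)
    · calc min 1 (a/b) ≤ 1 := min_le_left _ _
        _ ≤ (a/b) ^ (θ-1) := Real.one_le_rpow h ht0
  have hminpos : 0 < min 1 (a / b) := lt_min one_pos (div_pos ha hb)
  rw [hdetM]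
  calc a / ∏ i, ((2 - θ) + (θ - 1) * L i)
      ≤ a / min 1 (a / b) := by
        apply div_le_div_of_nonneg_left ha.le hminpos key
        -- might need different lemma
    _ ≤ max a b := by
        rcases le_total a b with h | h
        · rw [min_eq_right (by rw [div_le_one hb]; exact h)]
          have hx : a / (a / b) = b := by field_simp
          rw [hx]; exact le_max_right _ _
        · rw [min_eq_left (by rw [le_div_iff₀ hb]; linarith)]
          simp [max_eq_left h]
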